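/- arXiv:1802.04162 — 5 statements merged into one kernel-verified Lean document; each statement's English description precedes it below -/
import Mathlib

section
/- For every (possibly non-invariant) policy there exists a permutation-invariant policy whose expected reward is at least as large. Precisely: in the finite contextual-bandit setting, for every policy π : (Fin m → C) → (Fin m → ℝ) there exists a permutation-invariant policy π' : (Fin m → C) → (Fin m → ℝ) with J(π') ≥ J(π). (Paper: Lemma 1.) -/
open Finset

/-- A policy assigns to each context profile a probability vector over the `m` items. -/
def IsPolicy {C : Type*} [Fintype C] (m : ℕ) (π : (Fin m → C) → (Fin m → ℝ)) : Prop :=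
  ∀ c : Fin m → C, (∀ i, 0 ≤ π c i) ∧ ∑ i, π c i = 1

/-- Expected reward of a policy, the contexts being drawn i.i.d. from `ν`. -/
noncomputable def expReward {C : Type*} [Fintype C] (m : ℕ) (ν : C → ℝ) (R : C → ℝ)
    (π : (Fin m → C) → (Fin m → ℝ)) : ℝ :=
  ∑ c : Fin m → C, (∏ j, ν (c j)) * ∑ i, π c i * R (c i)

/-- A policy is permutation invariant if permuting the context profile permutes the
choice probabilities accordingly. -/
def PermInvariant {C : Type*} [Fintype C] (m : ℕ) (π : (Fin m → C) → (Fin m → ℝ)) : Prop :=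
  ∀ σ : Equiv.Perm (Fin m), ∀ c : Fin m → C, ∀ i : Fin m, π (c ∘ σ) i = π c (σ i)

/-- For every policy there exists a permutation-invariant policy whose expected reward
is at least as large. -/
theorem exists_permInvariant_policy_ge {C : Type*} [Fintype C] [Nonempty C]
    (m : ℕ) (hm : 1 ≤ m) (ν : C → ℝ) (hν0 : ∀ c, 0 ≤ ν c) (hν1 : ∑ c, ν c = 1)
    (R : C → ℝ) (π : (Fin m → C) → (Fin m → ℝ)) (hπ : IsPolicy m π) :
    ∃ π' : (Fin m → C) → (Fin m → ℝ),
      IsPolicy m π' ∧ PermInvariant m π' ∧ expReward m ν R π ≤ expReward m ν R π' := by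
  classical
  set N : ℝ := (Fintype.card (Equiv.Perm (Fin m)) : ℝ) with hN
  have hNpos : 0 < N := by
    rw [hN]
    exact_mod_cast Fintype.card_pos (α := Equiv.Perm (Fin m))
  refine ⟨fun c i => (∑ σ : Equiv.Perm (Fin m), π (c ∘ σ) (σ⁻¹ i)) / N, ?_, ?_, ?_⟩
  · intro c
    constructor
    · intro i
      apply div_nonneg _ hNpos.le
      exact Finset.sum_nonneg fun σ _ => (hπ (c ∘ σ)).1 _
    · rw [← Finset.sum_div]
      rw [Finset.sum_comm]
      have : ∀ σ : Equiv.Perm (Fin m), ∑ i, π (c ∘ σ) (σ⁻¹ i) = 1 := by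
        intro σ
        rw [Equiv.sum_comp (σ⁻¹) (π (c ∘ σ))]
        exact (hπ (c ∘ σ)).2
      simp only [this, Finset.sum_const, Finset.card_univ, nsmul_eq_mul, mul_one]
      field_simp
      exact hN.symm
  · intro τ c i
    have hsum : ∑ σ : Equiv.Perm (Fin m), π ((c ∘ τ) ∘ σ) (σ⁻¹ i)
        = ∑ σ : Equiv.Perm (Fin m), π (c ∘ σ) (σ⁻¹ (τ i)) := by
      refine Fintype.sum_equiv (Equiv.mulLeft τ) _ _ ?_
      intro σ
      have h1 : (c ∘ τ) ∘ σ = c ∘ ⇑(τ * σ) := by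
        ext x; simp [Equiv.Perm.mul_apply]
      have h2 : σ⁻¹ i = (τ * σ)⁻¹ (τ i) := by
        simp [Equiv.Perm.mul_apply]
      rw [h1, h2]
      rfl
    simp only [hsum]
  · have key : ∀ σ : Equiv.Perm (Fin m),
        (∑ c : Fin m → C, (∏ j, ν (c j)) * ∑ i, π (c ∘ σ) (σ⁻¹ i) * R (c i))
          = expReward m ν R π := by
      intro σ
      unfold expReward
      refine Fintype.sum_equiv (Equiv.arrowCongr σ.symm (Equiv.refl C)) _ _ ?_
      intro c
      have hc : (Equiv.arrowCongr σ.symm (Equiv.refl C)) c = c ∘ σ := by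
        ext x; simp [Equiv.arrowCongr]
      rw [hc]
      have hprod : (∏ j, ν ((c ∘ σ) j)) = ∏ j, ν (c j) := Equiv.prod_comp σ (fun j => ν (c j))
      rw [hprod]
      congr 1
      refine Fintype.sum_equiv σ.symm _ _ ?_
      intro i
      simp only [Function.comp_apply, Equiv.apply_symm_apply]
      rfl
    have heq : expReward m ν R
        (fun c i => (∑ σ : Equiv.Perm (Fin m), π (c ∘ σ) (σ⁻¹ i)) / N)
        = expReward m ν R π := by
      unfold expReward
      have step : ∀ c : Fin m → C,
          (∏ j, ν (c j)) * ∑ i, ((∑ σ : Equiv.Perm (Fin m), π (c ∘ σ) (σ⁻¹ i)) / N) * R (c i)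
            = (∑ σ : Equiv.Perm (Fin m),
                (∏ j, ν (c j)) * ∑ i, π (c ∘ σ) (σ⁻¹ i) * R (c i)) / N := by
        intro c
        simp only [div_mul_eq_mul_div, Finset.sum_mul, ← Finset.sum_div, ← Finset.mul_sum,
          ← mul_div_assoc]
        rw [Finset.sum_comm]
      simp only [step]
      rw [← Finset.sum_div, Finset.sum_comm]
      simp only [key]
      rw [Finset.sum_const, Finset.card_univ, nsmul_eq_mul, ← hN, mul_div_assoc, mul_comm,
        div_mul_cancel₀ _ hNpos.ne']
      rfl
    exact le_of_eq heq.symm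
end

section
/- For a permutation-invariant policy, the expected reward equals m times the expectation over a single context of the reward times the marginal probability of choosing that context. Precisely: in the finite contextual-bandit setting, if π is a permutation-invariant policy and for c₁ ∈ C one defines the marginal choice probability p(c₁) = ∑_{c : Fin m → C, c 0 = c₁} (∏_{j ≠ 0} ν (c j)) · π c 0, then J(π) = m · ∑_{c₁ ∈ C} ν c₁ · R c₁ · p(c₁). (Paper: derivation of Eq. (8).) -/
open Finset

/-- For a permutation-invariant policy, the expected reward equals `m` times the
expectation over a single context of the reward times the marginal probability of
choosing that context. -/
theorem expReward_eq_marginal {C : Type*} [Fintype C] [Nonempty C] [DecidableEq C]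
    (m : ℕ) (hm : 1 ≤ m) (ν : C → ℝ) (hν0 : ∀ c, 0 ≤ ν c) (hν1 : ∑ c, ν c = 1)
    (R : C → ℝ) (π : (Fin m → C) → (Fin m → ℝ)) (hπ : IsPolicy m π)
    (hinv : PermInvariant m π)
    (p : C → ℝ)
    (hp : ∀ c₁ : C, p c₁ =
      ∑ c ∈ Finset.univ.filter (fun c : Fin m → C => c ⟨0, hm⟩ = c₁),
        (∏ j ∈ Finset.univ.erase (⟨0, hm⟩ : Fin m), ν (c j)) * π c ⟨0, hm⟩) :
    expReward m ν R π = m * ∑ c₁ : C, ν c₁ * R c₁ * p c₁ := by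
  classical
  set i0 : Fin m := ⟨0, hm⟩ with hi0
  -- Step 1: each item contributes the same amount.
  have key : ∀ i : Fin m,
      (∑ c : Fin m → C, (∏ j, ν (c j)) * (π c i * R (c i)))
      = ∑ c : Fin m → C, (∏ j, ν (c j)) * (π c i0 * R (c i0)) := by
    intro i
    rw [← Equiv.sum_comp ((Equiv.swap i0 i).arrowCongr (Equiv.refl C))
      (fun c => (∏ j, ν (c j)) * (π c i * R (c i)))]
    refine Finset.sum_congr rfl fun c _ => ?_
    have hec : ((Equiv.swap i0 i).arrowCongr (Equiv.refl C)) c = c ∘ (Equiv.swap i0 i) := by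
      funext j; simp [Equiv.arrowCongr, Equiv.symm_swap]
    rw [hec]
    have hprod : (∏ j, ν ((c ∘ Equiv.swap i0 i) j)) = ∏ j, ν (c j) :=
      Equiv.prod_comp (Equiv.swap i0 i) (fun j => ν (c j))
    have hpi : π (c ∘ Equiv.swap i0 i) i = π c i0 := by
      rw [hinv (Equiv.swap i0 i) c i, Equiv.swap_apply_right]
    have hci : (c ∘ Equiv.swap i0 i) i = c i0 := by
      simp [Function.comp, Equiv.swap_apply_right]
    rw [hprod, hpi, hci]
  -- Step 2: compute the single-item sum fiberwise.
  have single : (∑ c : Fin m → C, (∏ j, ν (c j)) * (π c i0 * R (c i0)))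
      = ∑ c₁ : C, ν c₁ * R c₁ * p c₁ := by
    rw [← Finset.sum_fiberwise (univ : Finset (Fin m → C)) (fun c => c i0)
      (fun c => (∏ j, ν (c j)) * (π c i0 * R (c i0)))]
    refine Finset.sum_congr rfl fun c₁ _ => ?_
    rw [hp c₁, Finset.mul_sum]
    refine Finset.sum_congr rfl fun c hc => ?_
    have hc0 : c i0 = c₁ := (Finset.mem_filter.mp hc).2
    have : (∏ j, ν (c j)) = ν (c i0) * ∏ j ∈ univ.erase i0, ν (c j) :=
      (Finset.mul_prod_erase univ (fun j => ν (c j)) (mem_univ i0)).symm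
    rw [this, hc0]
    ring
  -- Put together.
  unfold expReward
  have : (∑ c : Fin m → C, (∏ j, ν (c j)) * ∑ i, π c i * R (c i))
      = ∑ i : Fin m, ∑ c : Fin m → C, (∏ j, ν (c j)) * (π c i * R (c i)) := by
    rw [Finset.sum_comm]
    exact Finset.sum_congr rfl fun c _ => by rw [Finset.mul_sum]
  rw [this]
  calc (∑ i : Fin m, ∑ c : Fin m → C, (∏ j, ν (c j)) * (π c i * R (c i)))
      = ∑ _i : Fin m, ∑ c₁ : C, ν c₁ * R c₁ * p c₁ := by
        refine Finset.sum_congr rfl fun i _ => ?_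
        rw [key i, single]
    _ = m * ∑ c₁ : C, ν c₁ * R c₁ * p c₁ := by
        rw [Finset.sum_const, card_univ, Fintype.card_fin, nsmul_eq_mul]
end

section
/- One-step policy gradient for the score-ratio policy class: in the finite contextual-bandit setting, let μ : ℝ → C → ℝ be such that μ θ c > 0 for all θ, c and θ ↦ μ θ c is differentiable for each c. Define the policy π_θ c i = μ θ (c i) / ∑_{j} μ θ (c j), the marginal choice probability p(θ, c₁) = ∑_{c : Fin m → C, c 0 = c₁} (∏_{j ≠ 0} ν (c j)) · (μ θ c₁ / ∑_{j} μ θ (c j)), and the objective J(θ) = ∑_{c : Fin m → C} (∏_j ν (c j)) · ∑_{i} π_θ c i · R (c i). Then J is differentiable in θ and J'(θ) = m · ∑_{c₁ ∈ C} ν c₁ · R c₁ · (∂/∂θ) p(θ, c₁). (Paper: Eq. (11) combined with Eqs. (13)–(14).) -/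
open Finset

/-- The score-ratio (Multinoulli) policy: item `i` is chosen with probability
proportional to its score `μ θ (c i)`. -/
noncomputable def scoreRatioPolicy {C : Type*} [Fintype C] (m : ℕ) (μ : ℝ → C → ℝ)
    (θ : ℝ) (c : Fin m → C) (i : Fin m) : ℝ :=
  μ θ (c i) / ∑ j, μ θ (c j)

/-- The expected reward of the score-ratio policy with parameter `θ`. -/
noncomputable def scoreRatioObjective {C : Type*} [Fintype C] (m : ℕ) (ν : C → ℝ)
    (R : C → ℝ) (μ : ℝ → C → ℝ) (θ : ℝ) : ℝ :=
  ∑ c : Fin m → C, (∏ j, ν (c j)) * ∑ i, scoreRatioPolicy m μ θ c i * R (c i)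

/-- The marginal probability of choosing an item with context `c₁`, in expectation of
the other `m - 1` contexts. -/
noncomputable def scoreRatioMarginal {C : Type*} [Fintype C] [DecidableEq C] (m : ℕ)
    (hm : 1 ≤ m) (ν : C → ℝ) (μ : ℝ → C → ℝ) (θ : ℝ) (c₁ : C) : ℝ :=
  ∑ c ∈ Finset.univ.filter (fun c : Fin m → C => c ⟨0, hm⟩ = c₁),
    (∏ j ∈ Finset.univ.erase (⟨0, hm⟩ : Fin m), ν (c j)) * (μ θ c₁ / ∑ j, μ θ (c j))

/-- One-step policy gradient for the score-ratio policy class: the objective is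
differentiable in `θ` and its derivative is `m` times the expectation over a single
context of the reward times the derivative of the marginal choice probability. -/
theorem scoreRatio_policy_gradient {C : Type*} [Fintype C] [Nonempty C] [DecidableEq C]
    (m : ℕ) (hm : 1 ≤ m) (ν : C → ℝ) (hν0 : ∀ c, 0 ≤ ν c) (hν1 : ∑ c, ν c = 1)
    (R : C → ℝ) (μ : ℝ → C → ℝ) (hμpos : ∀ θ c, 0 < μ θ c)
    (hμdiff : ∀ c, Differentiable ℝ (fun θ => μ θ c)) :
    ∀ θ : ℝ, HasDerivAt (scoreRatioObjective m ν R μ)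
      ((m : ℝ) * ∑ c₁ : C, ν c₁ * R c₁ *
        deriv (fun θ' => scoreRatioMarginal m hm ν μ θ' c₁) θ) θ := by
  intro θ
  set i0 : Fin m := ⟨0, hm⟩ with hi0
  have hFin : Nonempty (Fin m) := ⟨i0⟩
  -- denominator is nonzero
  have hS : ∀ (θ' : ℝ) (c : Fin m → C), (∑ j, μ θ' (c j)) ≠ 0 := by
    intro θ' c
    have : 0 < ∑ j, μ θ' (c j) :=
      Finset.sum_pos (fun j _ => hμpos θ' (c j)) Finset.univ_nonempty
    exact ne_of_gt this
  -- the marginal is differentiable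
  have hdm : ∀ c₁ : C, Differentiable ℝ (fun θ' => scoreRatioMarginal m hm ν μ θ' c₁) := by
    intro c₁
    unfold scoreRatioMarginal
    apply Differentiable.fun_sum
    intro c hc
    exact Differentiable.const_mul
      (Differentiable.div (hμdiff c₁) (Differentiable.fun_sum fun j _ => hμdiff (c j))
        (fun θ' => hS θ' c)) _
  -- key algebraic identity
  have key : ∀ θ' : ℝ, scoreRatioObjective m ν R μ θ' =
      (m : ℝ) * ∑ c₁ : C, ν c₁ * R c₁ * scoreRatioMarginal m hm ν μ θ' c₁ := by
    intro θ'
    unfold scoreRatioObjective scoreRatioPolicy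
    calc ∑ c : Fin m → C, (∏ j, ν (c j)) * ∑ i, μ θ' (c i) / (∑ j, μ θ' (c j)) * R (c i)
        = ∑ i : Fin m, ∑ c : Fin m → C,
            (∏ j, ν (c j)) * (μ θ' (c i) / (∑ j, μ θ' (c j)) * R (c i)) := by
          rw [Finset.sum_comm]
          exact Finset.sum_congr rfl fun c _ => Finset.mul_sum _ _ _
      _ = ∑ i : Fin m, ∑ c : Fin m → C,
            (∏ j, ν (c j)) * (μ θ' (c i0) / (∑ j, μ θ' (c j)) * R (c i0)) := by
          refine Finset.sum_congr rfl fun i _ => ?_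
          have hbij : Function.Bijective (fun c : Fin m → C => c ∘ Equiv.swap i0 i) := by
            have : Function.Involutive (fun c : Fin m → C => c ∘ Equiv.swap i0 i) := by
              intro c; funext j; simp [Function.comp]
            exact this.bijective
          refine (Fintype.sum_bijective _ hbij _ _ fun c => ?_).symm
          have h1 : ∏ j, ν ((c ∘ Equiv.swap i0 i) j) = ∏ j, ν (c j) :=
            Fintype.prod_equiv (Equiv.swap i0 i) _ _ (fun j => rfl)
          have h2 : ∑ j, μ θ' ((c ∘ Equiv.swap i0 i) j) = ∑ j, μ θ' (c j) :=
            Fintype.sum_equiv (Equiv.swap i0 i) _ _ (fun j => rfl)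
          have h3 : (c ∘ Equiv.swap i0 i) i = c i0 := by simp [Function.comp]
          rw [h1, h2, h3]
      _ = (m : ℝ) * ∑ c : Fin m → C,
            (∏ j, ν (c j)) * (μ θ' (c i0) / (∑ j, μ θ' (c j)) * R (c i0)) := by
          rw [Finset.sum_const, Finset.card_univ, Fintype.card_fin, nsmul_eq_mul]
      _ = (m : ℝ) * ∑ c₁ : C, ν c₁ * R c₁ * scoreRatioMarginal m hm ν μ θ' c₁ := by
          congr 1
          rw [← Finset.sum_fiberwise Finset.univ (fun c : Fin m → C => c i0)
            (fun c => (∏ j, ν (c j)) * (μ θ' (c i0) / (∑ j, μ θ' (c j)) * R (c i0)))]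
          refine Finset.sum_congr rfl fun c₁ _ => ?_
          unfold scoreRatioMarginal
          rw [Finset.mul_sum]
          refine Finset.sum_congr rfl fun c hc => ?_
          have hc0 : c i0 = c₁ := (Finset.mem_filter.mp hc).2
          have hprod : ∏ j, ν (c j) =
              ν (c i0) * ∏ j ∈ Finset.univ.erase i0, ν (c j) :=
            (Finset.mul_prod_erase Finset.univ (fun j => ν (c j)) (Finset.mem_univ i0)).symm
          rw [hprod, hc0]
          ring
  -- conclude
  have hD : HasDerivAt (fun θ' => (m : ℝ) * ∑ c₁ : C, ν c₁ * R c₁ *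
      scoreRatioMarginal m hm ν μ θ' c₁)
      ((m : ℝ) * ∑ c₁ : C, ν c₁ * R c₁ *
        deriv (fun θ' => scoreRatioMarginal m hm ν μ θ' c₁) θ) θ := by
    refine HasDerivAt.const_mul _ ?_
    exact HasDerivAt.fun_sum fun c₁ _ =>
      (((hdm c₁) θ).hasDerivAt).const_mul (ν c₁ * R c₁)
  have hfun : scoreRatioObjective m ν R μ = fun θ' => (m : ℝ) *
      ∑ c₁ : C, ν c₁ * R c₁ * scoreRatioMarginal m hm ν μ θ' c₁ := funext key
  rw [hfun]
  exact hD
end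

section
/- Policy gradient theorem for finite MDP-CR: let S, C be nonempty finite types, m ≥ 1, 0 ≤ γ < 1, g : S → C → ℝ with g s c ≥ 0 and ∑_c g s c = 1 for all s, T : S → C → S → ℝ with T s c s' ≥ 0 and ∑_{s'} T s c s' = 1, R : S → C → ℝ, and P₀ : S → ℝ with P₀ s ≥ 0 and ∑_s P₀ s = 1. Let p : ℝ → S → C → ℝ (the marginal probability of choosing a context, parameterized by θ ∈ ℝ) satisfy p θ s c ≥ 0, differentiability of θ ↦ p θ s c for each (s, c), and m · ∑_c g s c · p θ s c = 1 for all θ, s. Let V : ℝ → S → ℝ with θ ↦ V θ s differentiable for each s, and define Q θ s c = R s c + γ · ∑_{s'} T s c s' · V θ s'; assume the Bellman relation V θ s = m · ∑_c g s c · p θ s c · Q θ s c holds for all θ, s. Define the one-step state transition matrix K_θ s s' = m · ∑_c g s c · p θ s c · T s c s', the discounted state density ρ_θ s' = ∑_s P₀ s · ∑_{t≥0} γ^t (K_θ^t) s s', and the objective J(θ) = ∑_s P₀ s · V θ s. Then J is differentiable and J'(θ) = m · ∑_{s} ρ_θ s · ∑_{c} g s c · (∂/∂θ) p θ s c · Q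 θ s c. (Paper: Theorem 1, stated for finite state and context spaces and a one-dimensional parameter.) -/
open Finset Matrix

/-- Action-value function: immediate reward plus discounted expected next-state value. -/
noncomputable def Qval {S C : Type*} [Fintype S] (γ : ℝ) (T : S → C → S → ℝ)
    (R : S → C → ℝ) (V : ℝ → S → ℝ) (θ : ℝ) (s : S) (c : C) : ℝ :=
  R s c + γ * ∑ s', T s c s' * V θ s'

/-- The one-step state transition matrix induced by the policy with marginal choice
probabilities `p`. -/
noncomputable def Kmat {S C : Type*} [Fintype C] (m : ℕ) (g : S → C → ℝ)
    (p : ℝ → S → C → ℝ) (T : S → C → S → ℝ) (θ : ℝ) : Matrix S S ℝ :=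
  fun s s' => (m : ℝ) * ∑ c, g s c * p θ s c * T s c s'

/-- The discounted state density induced by the initial distribution `P₀` and the
transition matrix `Kmat`. -/
noncomputable def rhoDensity {S C : Type*} [Fintype S] [DecidableEq S] [Fintype C]
    (m : ℕ) (g : S → C → ℝ) (p : ℝ → S → C → ℝ) (T : S → C → S → ℝ)
    (γ : ℝ) (P₀ : S → ℝ) (θ : ℝ) (s' : S) : ℝ :=
  ∑ s, P₀ s * ∑' t : ℕ, γ ^ t * ((Kmat m g p T θ) ^ t) s s'

/-- Policy gradient theorem for finite MDP-CR (Theorem 1 of the paper, for finite state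
and context spaces and a one-dimensional parameter). -/
theorem policy_gradient_mdpcr {S C : Type*} [Fintype S] [Nonempty S] [DecidableEq S]
    [Fintype C] [Nonempty C]
    (m : ℕ) (hm : 1 ≤ m) (γ : ℝ) (hγ0 : 0 ≤ γ) (hγ1 : γ < 1)
    (g : S → C → ℝ) (hg0 : ∀ s c, 0 ≤ g s c) (hg1 : ∀ s, ∑ c, g s c = 1)
    (T : S → C → S → ℝ) (hT0 : ∀ s c s', 0 ≤ T s c s') (hT1 : ∀ s c, ∑ s', T s c s' = 1)
    (R : S → C → ℝ)
    (P₀ : S → ℝ) (hP0 : ∀ s, 0 ≤ P₀ s) (hP1 : ∑ s, P₀ s = 1)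
    (p : ℝ → S → C → ℝ) (hp0 : ∀ θ s c, 0 ≤ p θ s c)
    (hpdiff : ∀ s c, Differentiable ℝ (fun θ => p θ s c))
    (hpnorm : ∀ θ s, (m : ℝ) * ∑ c, g s c * p θ s c = 1)
    (V : ℝ → S → ℝ) (hVdiff : ∀ s, Differentiable ℝ (fun θ => V θ s))
    (hBellman : ∀ θ s, V θ s = (m : ℝ) * ∑ c, g s c * p θ s c * Qval γ T R V θ s c) :
    ∀ θ : ℝ, HasDerivAt (fun θ' => ∑ s, P₀ s * V θ' s)
      ((m : ℝ) * ∑ s, rhoDensity m g p T γ P₀ θ s *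
        ∑ c, g s c * deriv (fun θ' => p θ' s c) θ * Qval γ T R V θ s c) θ := by
  intro θ
  set K : Matrix S S ℝ := Kmat m g p T θ with hK
  set x : S → ℝ := fun s => deriv (fun θ' => V θ' s) θ with hx
  set b : S → ℝ := fun s =>
    (m : ℝ) * ∑ c, g s c * deriv (fun θ' => p θ' s c) θ * Qval γ T R V θ s c with hb
  -- basic facts about K
  have hK0 : ∀ s s', 0 ≤ K s s' := fun s s' =>
    mul_nonneg (Nat.cast_nonneg m) (Finset.sum_nonneg fun c _ =>
      mul_nonneg (mul_nonneg (hg0 s c) (hp0 θ s c)) (hT0 s c s'))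
  have hKrow : ∀ s, ∑ s', K s s' = 1 := by
    intro s
    have h1 : ∑ s', K s s' = (m : ℝ) * ∑ c, ∑ s', g s c * p θ s c * T s c s' := by
      simp only [hK, Kmat, ← Finset.mul_sum]
      rw [Finset.sum_comm]
      simp only [Finset.mul_sum]
    rw [h1]
    have h2 : ∀ c : C, ∑ s', g s c * p θ s c * T s c s' = g s c * p θ s c := by
      intro c; rw [← Finset.mul_sum, hT1 s c, mul_one]
    simp_rw [h2]
    exact hpnorm θ s
  have hKpow0 : ∀ (n : ℕ) (s s' : S), 0 ≤ (K ^ n) s s' := by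
    intro n
    induction n with
    | zero =>
        intro s s'
        by_cases h : s = s' <;> simp [Matrix.one_apply, h]
    | succ n ih =>
        intro s s'
        rw [pow_succ, Matrix.mul_apply]
        exact Finset.sum_nonneg fun u _ => mul_nonneg (ih s u) (hK0 u s')
  have hKpowrow : ∀ (n : ℕ) (s : S), ∑ s', (K ^ n) s s' = 1 := by
    intro n
    induction n with
    | zero => intro s; simp [Matrix.one_apply]
    | succ n ih =>
        intro s
        rw [pow_succ]
        calc ∑ s', (K ^ n * K) s s' = ∑ u, (K ^ n) s u * ∑ s', K u s' := by
              simp_rw [Matrix.mul_apply, Finset.mul_sum]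
              exact Finset.sum_comm
          _ = 1 := by simp_rw [hKrow, mul_one]; exact ih s
  have hKpow1 : ∀ (n : ℕ) (s s' : S), (K ^ n) s s' ≤ 1 := fun n s s' =>
    calc (K ^ n) s s' ≤ ∑ u, (K ^ n) s u :=
          Finset.single_le_sum (fun u _ => hKpow0 n s u) (Finset.mem_univ s')
      _ = 1 := hKpowrow n s
  -- derivative of Q
  have hQd : ∀ s c, HasDerivAt (fun θ' => Qval γ T R V θ' s c)
      (γ * ∑ s', T s c s' * x s') θ := by
    intro s c
    simp only [Qval]
    exact HasDerivAt.const_add (R s c) (HasDerivAt.const_mul γ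
      (HasDerivAt.fun_sum fun s' _ => ((hVdiff s' θ).hasDerivAt).const_mul (T s c s')))
  -- derivative of V from the Bellman equation
  have hVd : ∀ s, HasDerivAt (fun θ' => V θ' s)
      ((m : ℝ) * ∑ c, (g s c * deriv (fun θ' => p θ' s c) θ * Qval γ T R V θ s c
        + g s c * p θ s c * (γ * ∑ s', T s c s' * x s'))) θ := by
    intro s
    have hfun : (fun θ' => V θ' s)
        = fun θ' => (m : ℝ) * ∑ c, g s c * p θ' s c * Qval γ T R V θ' s c :=
      funext fun θ' => hBellman θ' s
    rw [hfun]
    refine HasDerivAt.const_mul _ (HasDerivAt.fun_sum fun c _ => ?_)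
    have hp' : HasDerivAt (fun θ' => g s c * p θ' s c)
        (g s c * deriv (fun θ' => p θ' s c) θ) θ :=
      ((hpdiff s c θ).hasDerivAt).const_mul (g s c)
    exact hp'.mul (hQd s c)
  -- the linear system satisfied by x
  have hxeq : ∀ s, x s = b s + γ * ∑ s', K s s' * x s' := by
    intro s
    have h1 : x s = (m : ℝ) * ∑ c, (g s c * deriv (fun θ' => p θ' s c) θ * Qval γ T R V θ s c
        + g s c * p θ s c * (γ * ∑ s', T s c s' * x s')) := (hVd s).deriv
    rw [h1, hb, hK]
    simp only [Kmat, Finset.mul_sum, Finset.sum_mul, Finset.sum_add_distrib, mul_add]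
    congr 1
    rw [Finset.sum_comm]
    refine Finset.sum_congr rfl fun c _ => ?_
    refine Finset.sum_congr rfl fun s' _ => ?_
    ring
  -- telescoping identity
  have htel : ∀ (n : ℕ) (s : S), x s = (∑ t ∈ Finset.range n, γ ^ t * ∑ s', (K ^ t) s s' * b s')
      + γ ^ n * ∑ s', (K ^ n) s s' * x s' := by
    intro n
    induction n with
    | zero => intro s; simp [Matrix.one_apply]
    | succ n ih =>
        intro s
        have h3 : ∑ s', (K ^ n) s s' * x s'
            = ∑ s', (K ^ n) s s' * b s' + γ * ∑ u, (K ^ (n + 1)) s u * x u := by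
          calc ∑ s', (K ^ n) s s' * x s'
              = ∑ s', (K ^ n) s s' * (b s' + γ * ∑ u, K s' u * x u) :=
                Finset.sum_congr rfl fun s' _ => by rw [← hxeq s']
            _ = ∑ s', (K ^ n) s s' * b s'
                + γ * ∑ u, (∑ s', (K ^ n) s s' * K s' u) * x u := by
                simp only [mul_add, Finset.sum_add_distrib, Finset.mul_sum, Finset.sum_mul]
                congr 1
                rw [Finset.sum_comm]
                refine Finset.sum_congr rfl fun s' _ => ?_
                refine Finset.sum_congr rfl fun u _ => ?_
                ring
            _ = ∑ s', (K ^ n) s s' * b s' + γ * ∑ u, (K ^ (n + 1)) s u * x u := by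
                simp_rw [pow_succ, Matrix.mul_apply]
        rw [Finset.sum_range_succ, ih s, h3]
        ring
  -- bound on matrix-vector products
  have hbound : ∀ (n : ℕ) (s : S) (v : S → ℝ),
      |∑ s', (K ^ n) s s' * v s'| ≤ ∑ s', |v s'| := by
    intro n s v
    calc |∑ s', (K ^ n) s s' * v s'| ≤ ∑ s', |(K ^ n) s s' * v s'| :=
          Finset.abs_sum_le_sum_abs _ _
      _ ≤ ∑ s', |v s'| := Finset.sum_le_sum fun s' _ => by
          rw [abs_mul, abs_of_nonneg (hKpow0 n s s')]
          exact mul_le_of_le_one_left (abs_nonneg _) (hKpow1 n s s')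
  -- summability
  have hsummable : ∀ s : S, Summable (fun t : ℕ => γ ^ t * ∑ s', (K ^ t) s s' * b s') := by
    intro s
    apply Summable.of_norm
    refine Summable.of_nonneg_of_le (fun t => norm_nonneg _) (fun t => ?_)
      ((summable_geometric_of_lt_one hγ0 hγ1).mul_right (∑ s', |b s'|))
    rw [Real.norm_eq_abs, abs_mul, abs_pow, abs_of_nonneg hγ0]
    exact mul_le_mul_of_nonneg_left (hbound t s b) (pow_nonneg hγ0 t)
  -- identifying the limit
  have htsum : ∀ s : S, (∑' t : ℕ, γ ^ t * ∑ s', (K ^ t) s s' * b s') = x s := by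
    intro s
    have h1 := (hsummable s).hasSum.tendsto_sum_nat
    have hx0 : Filter.Tendsto (fun n : ℕ => γ ^ n * ∑ s', (K ^ n) s s' * x s')
        Filter.atTop (nhds 0) := by
      refine squeeze_zero_norm (a := fun n : ℕ => γ ^ n * ∑ s', |x s'|) (fun n => ?_) ?_
      · rw [Real.norm_eq_abs, abs_mul, abs_pow, abs_of_nonneg hγ0]
        exact mul_le_mul_of_nonneg_left (hbound n s x) (pow_nonneg hγ0 n)
      · simpa using (tendsto_pow_atTop_nhds_zero_of_lt_one hγ0 hγ1).mul_const (∑ s', |x s'|)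
    have h2 : Filter.Tendsto (fun n : ℕ => ∑ t ∈ Finset.range n, γ ^ t * ∑ s', (K ^ t) s s' * b s')
        Filter.atTop (nhds (x s)) := by
      have heq : (fun n : ℕ => ∑ t ∈ Finset.range n, γ ^ t * ∑ s', (K ^ t) s s' * b s')
          = fun n : ℕ => x s - γ ^ n * ∑ s', (K ^ n) s s' * x s' := by
        funext n; rw [htel n s]; ring
      rw [heq]
      simpa using tendsto_const_nhds.sub hx0
    exact tendsto_nhds_unique h1 h2
  -- summability per entry
  have hsumEntry : ∀ s s' : S, Summable (fun t : ℕ => γ ^ t * (K ^ t) s s' * b s') := by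
    intro s s'
    apply Summable.of_norm
    refine Summable.of_nonneg_of_le (fun t => norm_nonneg _) (fun t => ?_)
      ((summable_geometric_of_lt_one hγ0 hγ1).mul_right |b s'|)
    rw [Real.norm_eq_abs, abs_mul, abs_mul, abs_pow, abs_of_nonneg hγ0,
      abs_of_nonneg (hKpow0 t s s')]
    exact mul_le_mul_of_nonneg_right
      (mul_le_of_le_one_right (pow_nonneg hγ0 t) (hKpow1 t s s')) (abs_nonneg _)
  -- the inner identity
  have hinner : ∀ s : S, ∑ s', (∑' t : ℕ, γ ^ t * (K ^ t) s s') * b s' = x s := by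
    intro s
    have h1 : ∀ s' : S, (∑' t : ℕ, γ ^ t * (K ^ t) s s') * b s'
        = ∑' t : ℕ, γ ^ t * (K ^ t) s s' * b s' := fun s' => (tsum_mul_right).symm
    simp_rw [h1]
    rw [← Summable.tsum_finsetSum (fun s' _ => hsumEntry s s'), ← htsum s]
    exact tsum_congr fun t => by rw [Finset.mul_sum]; exact Finset.sum_congr rfl fun s' _ => by ring
  -- main derivative
  have hJ : HasDerivAt (fun θ' => ∑ s, P₀ s * V θ' s) (∑ s, P₀ s * x s) θ :=
    HasDerivAt.fun_sum fun s _ => ((hVdiff s θ).hasDerivAt).const_mul (P₀ s)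
  have hfinal : (m : ℝ) * ∑ s, rhoDensity m g p T γ P₀ θ s *
      ∑ c, g s c * deriv (fun θ' => p θ' s c) θ * Qval γ T R V θ s c = ∑ s, P₀ s * x s := by
    calc (m : ℝ) * ∑ s, rhoDensity m g p T γ P₀ θ s *
          ∑ c, g s c * deriv (fun θ' => p θ' s c) θ * Qval γ T R V θ s c
        = ∑ s', rhoDensity m g p T γ P₀ θ s' * b s' := by
          rw [Finset.mul_sum]
          exact Finset.sum_congr rfl fun s' _ => by rw [hb]; ring
      _ = ∑ s, P₀ s * ∑ s', (∑' t : ℕ, γ ^ t * (K ^ t) s s') * b s' := by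
          simp only [rhoDensity, ← hK, Finset.sum_mul, Finset.mul_sum]
          rw [Finset.sum_comm]
          refine Finset.sum_congr rfl fun s _ => ?_
          refine Finset.sum_congr rfl fun s' _ => ?_
          ring
      _ = ∑ s, P₀ s * x s := Finset.sum_congr rfl fun s _ => by rw [hinner s]
  rw [hfinal]
  exact hJ
end

section
/- Compatible function approximation gives an unbiased policy gradient: let C' be a nonempty finite type, ξ : C' → ℝ with ξ c ≥ 0, Q : C' → ℝ, and let p : ℝ^k → C' → ℝ and f : ℝ^k → C' → ℝ be differentiable in the parameter, with p θ c > 0 for all c. Fix parameters θ, φ ∈ ℝ^k and suppose: (i) compatibility: for all c ∈ C', the gradient ∇_φ f φ c equals ∇_θ (log (p θ c)), i.e. ∇_φ f φ c = (∇_θ p θ c) / (p θ c); and (ii) φ is a critical point of the weighted squared error: ∑_{c} ξ c · p θ c · (f φ c − Q c) · ∇_φ f φ c = 0 (as a vector in ℝ^k). Then ∑_{c} ξ c · (∇_θ p θ c) · Q c = ∑_{c} ξ c · (∇_θ p θ c) · f φ c, i.e. replacing Q by the approximator f in the policy gradient m ∑_c ξ c (∇_θ p θ c) Q c introduces no bias.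 (Paper: Theorem 2, stated for a finite augmented-context space.) -/
open Finset

/-- Compatible function approximation gives an unbiased policy gradient
(Theorem 2 of the paper, for a finite augmented-context space `C'` and parameters in
`ℝ^k`). -/
theorem compatible_function_approximation_unbiased
    {C' : Type*} [Fintype C'] [Nonempty C'] (k : ℕ)
    (ξ : C' → ℝ) (hξ : ∀ c, 0 ≤ ξ c) (Q : C' → ℝ)
    (p : EuclideanSpace ℝ (Fin k) → C' → ℝ) (f : EuclideanSpace ℝ (Fin k) → C' → ℝ)
    (hpdiff : ∀ c, Differentiable ℝ (fun θ => p θ c))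
    (hfdiff : ∀ c, Differentiable ℝ (fun φ => f φ c))
    (hppos : ∀ θ c, 0 < p θ c)
    (θ φ : EuclideanSpace ℝ (Fin k))
    (hcompat : ∀ c : C', gradient (fun φ' => f φ' c) φ =
      (1 / p θ c) • gradient (fun θ' => p θ' c) θ)
    (hcritical : ∑ c : C', (ξ c * p θ c * (f φ c - Q c)) •
      gradient (fun φ' => f φ' c) φ = 0) :
    ∑ c : C', (ξ c * Q c) • gradient (fun θ' => p θ' c) θ =
      ∑ c : C', (ξ c * f φ c) • gradient (fun θ' => p θ' c) θ := by
  have key : ∑ c : C', (ξ c * (f φ c - Q c)) • gradient (fun θ' => p θ' c) θ = 0 := by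
    rw [← hcritical]
    refine Finset.sum_congr rfl fun c _ => ?_
    rw [hcompat c, smul_smul]
    congr 1
    field_simp [(hppos θ c).ne']
  rw [eq_comm, ← sub_eq_zero, ← Finset.sum_sub_distrib, ← key]
  refine Finset.sum_congr rfl fun c _ => ?_
  rw [← sub_smul]
  congr 1
  ring
end
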